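/- Let K be a commutative ring equipped with a family (d_i)_{i ∈ Δ} of derivations, assume K is simple (its only Δ-ideals are (0) and K), and let C = {λ ∈ K : d_i λ = 0 for all i} be its field of constants (a field by simplicity; assume it is a field). Let A be a commutative C-algebra, and let φ : K → C be a C-algebra homomorphism (a ring homomorphism with φ(c) = c for all c ∈ C). Equip A ⊗_C K with the derivations (D_i) characterized by D_i(a ⊗ λ) = a ⊗ d_i(λ). Define i : A → A ⊗_C K, a ↦ a ⊗ 1, and j : A ⊗_C K → A the ring homomorphism with j(a ⊗ λ) = a·φ(λ). Then: (1) for every Δ-ideal J of A ⊗_C K, i⁻¹(J) = j(J) (the set-theoretic image of J under j, which is an ideal since j is surjective); (2) for every ideal I of A, (j⁻¹(I))_# equals the ideal of A ⊗_C K generated by i(I), where for an ideal M of A ⊗_C K, M_# := {x : θ(x) ∈ M for every finite composition θ of the derivations D_i, including the identity} is the largest Δ-ideal contained in M. -/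

import Mathlib

open scoped TensorProduct

set_option synthInstance.maxHeartbeats 1000000
set_option maxHeartbeats 1000000

/-- The subring of constants of a commutative ring equipped with a family of
derivations. -/
def constants {K Δ : Type*} [CommRing K] (d : Δ → Derivation ℤ K K) : Subring K where
  carrier := {x : K | ∀ i, d i x = 0}
  zero_mem' := fun i => map_zero (d i)
  one_mem' := fun i => (d i).map_one_eq_zero
  add_mem' := fun ha hb i => by rw [map_add, ha i, hb i, add_zero]
  neg_mem' := fun ha i => by rw [map_neg, ha i, neg_zero]
  mul_mem' := fun {a b} ha hb i => by
    rw [(d i).leibniz, ha i, hb i, smul_zero, smul_zero, add_zero]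

/-- The canonical map `i : A → A ⊗_C K`, `a ↦ a ⊗ 1`. -/
noncomputable def inclLeft (C : Type*) [CommRing C] (A K : Type*) [CommRing A]
    [CommRing K] [Algebra C A] [Algebra C K] : A →+* A ⊗[C] K :=
  Algebra.TensorProduct.includeLeftRingHom

/-- The composition `D_{i₁} ∘ ⋯ ∘ D_{iₙ}` of the derivations of the family `D`
indexed by the word `l` (the empty word giving the identity map). -/
def derWord {R Δ : Type*} [CommRing R] (D : Δ → Derivation ℤ R R) (l : List Δ) :
    R → R :=
  l.foldr (fun i (f : R → R) => ⇑(D i) ∘ f) id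

/-!
Every `Δ`-ideal `J` of `A ⊗_C K` is generated by its contraction `J ∩ A`. Write an element
of `J` as `∑ aₖ ⊗ μₖ` and induct on the number of terms. By simplicity of `K` the possible
first coefficients form the unit ideal, so `J` contains some `y = a₀ ⊗ 1 + ∑ aₖ ⊗ νₖ`. The
derivatives of `y` are shorter sums, hence lie in `(J ∩ A) ⊗ K`; since the common kernel of
the `d i` is `C`, this forces `y ≡ b ⊗ 1` modulo `(J ∩ A) ⊗ K` (checked in `(A ⧸ J ∩ A) ⊗ K`
with a `C`-basis), so `y ∈ (J ∩ A) ⊗ K`, and subtracting `μ₀ y` shortens the original sum.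
Both parts of the theorem follow from this, from `j ∘ i = id`, and from the fact that the
extension of an ideal of `A` is again a `Δ`-ideal.
-/

section DerivationWords

variable {R Δ : Type*} [CommRing R] (D : Δ → Derivation ℤ R R)

@[simp] lemma derWord_nil (x : R) : derWord D [] x = x := rfl

@[simp] lemma derWord_cons (i : Δ) (l : List Δ) (x : R) :
    derWord D (i :: l) x = D i (derWord D l x) := rfl

@[simp] lemma derWord_zero (l : List Δ) : derWord D l 0 = 0 := by
  induction l with
  | nil => rfl
  | cons i l ih => rw [derWord_cons, ih, map_zero]

lemma derWord_add (l : List Δ) (x y : R) :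
    derWord D l (x + y) = derWord D l x + derWord D l y := by
  induction l with
  | nil => rfl
  | cons i l ih => rw [derWord_cons, ih, map_add, derWord_cons, derWord_cons]

lemma derWord_append (l₁ l₂ : List Δ) (x : R) :
    derWord D (l₁ ++ l₂) x = derWord D l₁ (derWord D l₂ x) := by
  induction l₁ with
  | nil => rfl
  | cons i l ih => rw [List.cons_append, derWord_cons, ih, derWord_cons]

lemma derWord_mem {L : Ideal R} (hL : ∀ i, ∀ x ∈ L, D i x ∈ L) {x : R} (hx : x ∈ L)
    (l : List Δ) : derWord D l x ∈ L := by
  induction l with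
  | nil => exact hx
  | cons i l ih => exact hL i _ ih

lemma derivation_mem_span_range_derWord (y : R) (i : Δ) {z : R}
    (hz : z ∈ Ideal.span (Set.range fun l => derWord D l y)) :
    D i z ∈ Ideal.span (Set.range fun l => derWord D l y) := by
  induction hz using Submodule.span_induction with
  | mem w hw =>
    obtain ⟨l, rfl⟩ := hw
    exact Ideal.subset_span ⟨i :: l, rfl⟩
  | zero => simp
  | add w₁ w₂ _ _ ih₁ ih₂ => rw [map_add]; exact Ideal.add_mem _ ih₁ ih₂
  | smul c w hw ih =>
    rw [smul_eq_mul, (D i).leibniz, smul_eq_mul, smul_eq_mul]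
    exact Ideal.add_mem _ (Ideal.mul_mem_left _ _ ih) (Ideal.mul_mem_right _ _ hw)

/-- The ideal `M_#`: the largest ideal contained in `M` that is stable under all the `D i`. -/
def Ideal.derivCore (M : Ideal R) : Ideal R where
  carrier := {x | ∀ l, derWord D l x ∈ M}
  zero_mem' l := by rw [derWord_zero]; exact M.zero_mem
  add_mem' hx hy l := by rw [derWord_add]; exact M.add_mem (hx l) (hy l)
  smul_mem' c y hy l := by
    have hle : Ideal.span (Set.range fun l => derWord D l y) ≤ M :=
      Ideal.span_le.mpr (Set.range_subset_iff.mpr hy)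
    exact hle <| derWord_mem D (derivation_mem_span_range_derWord D y)
      (Ideal.mul_mem_left _ c (Ideal.subset_span ⟨[], rfl⟩)) l

lemma Ideal.derivCore_le (M : Ideal R) : M.derivCore D ≤ M := fun _ hx => hx []

lemma Ideal.derivation_mem_derivCore {M : Ideal R} (i : Δ) {x : R} (hx : x ∈ M.derivCore D) :
    D i x ∈ M.derivCore D := fun l => by
  simpa [derWord_append] using hx (l ++ [i])

lemma Ideal.le_derivCore {L M : Ideal R} (hL : ∀ i, ∀ x ∈ L, D i x ∈ L) (hLM : L ≤ M) :
    L ≤ M.derivCore D := fun _ hx l => hLM (derWord_mem D hL hx l)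

end DerivationWords

lemma LinearMap.rTensor_lTensor_apply {R M N P Q : Type*} [CommSemiring R] [AddCommMonoid M]
    [AddCommMonoid N] [AddCommMonoid P] [AddCommMonoid Q] [Module R M] [Module R N] [Module R P]
    [Module R Q] (f : M →ₗ[R] P) (g : N →ₗ[R] Q) (x : M ⊗[R] N) :
    rTensor Q f (lTensor M g x) = lTensor P g (rTensor N f x) := by
  rw [← comp_apply, rTensor_comp_lTensor, ← lTensor_comp_rTensor, comp_apply]

section ExtendedIdeal

variable {C K A : Type*} [CommRing C] [CommRing K] [Algebra C K] [CommRing A] [Algebra C A]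

@[simp] lemma inclLeft_apply (a : A) : inclLeft C A K a = a ⊗ₜ[C] 1 := rfl

lemma mem_map_inclLeft_iff (I : Ideal A) (x : A ⊗[C] K) :
    x ∈ I.map (inclLeft C A K) ↔ LinearMap.rTensor K (I.restrictScalars C).mkQ x = 0 := by
  rw [(rTensor_exact K (LinearMap.exact_subtype_mkQ _) (Submodule.mkQ_surjective _)) x,
    ← LinearMap.coe_range, SetLike.mem_coe, ← Ideal.map_includeLeft_eq]
  rfl

lemma lTensor_mem_map_inclLeft (f : K →ₗ[C] K) (I : Ideal A) {x : A ⊗[C] K}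
    (hx : x ∈ I.map (inclLeft C A K)) : LinearMap.lTensor A f x ∈ I.map (inclLeft C A K) := by
  rw [mem_map_inclLeft_iff] at hx ⊢
  rw [LinearMap.rTensor_lTensor_apply, hx, map_zero]

lemma TensorProduct.exists_fin_sum_tmul (x : A ⊗[C] K) :
    ∃ (n : ℕ) (a : Fin n → A) (μ : Fin n → K), x = ∑ k, a k ⊗ₜ[C] μ k := by
  induction x using TensorProduct.induction_on with
  | zero => exact ⟨0, Fin.elim0, Fin.elim0, by simp⟩
  | tmul a c => exact ⟨1, fun _ => a, fun _ => c, by simp⟩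
  | add x y hx hy =>
    obtain ⟨n, a, μ, rfl⟩ := hx
    obtain ⟨n', a', μ', rfl⟩ := hy
    exact ⟨n + n', Fin.append a a', Fin.append μ μ', by simp [Fin.sum_univ_add]⟩

end ExtendedIdeal

section ConstantCoefficients

variable {C K Δ : Type*} [Field C] [CommRing K] [Algebra C K] [Nontrivial K]
  (δ : Δ → K →ₗ[C] K)

lemma exists_eq_tmul_one_of_forall_lTensor_eq_zero
    (hker : ∀ k : K, (∀ i, δ i k = 0) → k ∈ Set.range (algebraMap C K))
    {M : Type*} [AddCommGroup M] [Module C M] (y : M ⊗[C] K)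
    (hy : ∀ i, LinearMap.lTensor M (δ i) y = 0) : ∃ m : M, y = m ⊗ₜ[C] 1 := by
  classical
  let b := Module.Basis.ofVectorSpace C M
  let e : M ⊗[C] K ≃ₗ[C] (Module.Basis.ofVectorSpaceIndex C M →₀ K) :=
    (TensorProduct.congr b.repr (LinearEquiv.refl C K)).trans
      (TensorProduct.finsuppScalarLeft C K _)
  have he : ∀ (m : M) (μ : K) s, e (m ⊗ₜ μ) s = b.repr m s • μ := by
    intro m μ s
    simp [e, TensorProduct.finsuppScalarLeft_apply_tmul_apply]
  have he_lTensor : ∀ i (z : M ⊗[C] K) s, e (LinearMap.lTensor M (δ i) z) s = δ i (e z s) := by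
    intro i z s
    induction z using TensorProduct.induction_on with
    | zero => simp
    | tmul m μ => rw [LinearMap.lTensor_tmul, he, he, map_smul]
    | add z w hz hw => simp only [map_add, Finsupp.add_apply, hz, hw]
  have hcoord : ∀ s, ∃ c : C, algebraMap C K c = e y s := fun s =>
    hker _ fun i => by rw [← he_lTensor, hy, map_zero, Finsupp.zero_apply]
  choose c hc using hcoord
  have hc_finite : (Function.support c).Finite := by
    refine (e y).support.finite_toSet.subset fun s hs => ?_
    simpa [← hc s] using hs
  refine ⟨b.repr.symm (Finsupp.ofSupportFinite c hc_finite), e.injective ?_⟩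
  ext s
  rw [he, LinearEquiv.apply_symm_apply, Finsupp.ofSupportFinite_coe, Algebra.smul_def, mul_one,
    hc]

variable {A : Type*} [CommRing A] [Algebra C A]

lemma exists_sub_tmul_one_mem_map_inclLeft
    (hker : ∀ k : K, (∀ i, δ i k = 0) → k ∈ Set.range (algebraMap C K))
    (I : Ideal A) (x : A ⊗[C] K)
    (hx : ∀ i, LinearMap.lTensor A (δ i) x ∈ I.map (inclLeft C A K)) :
    ∃ b : A, x - b ⊗ₜ[C] 1 ∈ I.map (inclLeft C A K) := by
  set Q := LinearMap.rTensor K (I.restrictScalars C).mkQ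
  have hQx : ∀ i, LinearMap.lTensor _ (δ i) (Q x) = 0 := fun i => by
    rw [← LinearMap.rTensor_lTensor_apply, ← mem_map_inclLeft_iff]
    exact hx i
  obtain ⟨m, hm⟩ := exists_eq_tmul_one_of_forall_lTensor_eq_zero δ hker (Q x) hQx
  obtain ⟨b, rfl⟩ := Submodule.mkQ_surjective _ m
  refine ⟨b, (mem_map_inclLeft_iff I _).mpr ?_⟩
  rw [map_sub, hm, LinearMap.rTensor_tmul, sub_self]

end ConstantCoefficients

section CoefficientIdeal

variable {C K A Δ : Type*} [CommRing C] [CommRing K] [Algebra C K] [CommRing A] [Algebra C A]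

def firstCoeffIdeal (J : Ideal (A ⊗[C] K)) (a₀ : A) {m : ℕ} (a : Fin m → A) : Ideal K where
  carrier := {μ | ∃ ν : Fin m → K, a₀ ⊗ₜ[C] μ + ∑ k, a k ⊗ₜ[C] ν k ∈ J}
  add_mem' := by
    rintro μ₁ μ₂ ⟨ν₁, h₁⟩ ⟨ν₂, h₂⟩
    refine ⟨ν₁ + ν₂, ?_⟩
    convert J.add_mem h₁ h₂ using 1
    simp only [Pi.add_apply, TensorProduct.tmul_add, Finset.sum_add_distrib]
    abel
  zero_mem' := ⟨0, by simp⟩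
  smul_mem' := by
    rintro c μ ⟨ν, h⟩
    refine ⟨c • ν, ?_⟩
    convert J.mul_mem_left ((1 : A) ⊗ₜ[C] c) h using 1
    simp [mul_add, Finset.mul_sum, Algebra.TensorProduct.tmul_mul_tmul]

lemma map_mem_firstCoeffIdeal {J : Ideal (A ⊗[C] K)} {a₀ : A} {m : ℕ} {a : Fin m → A}
    (f : K →ₗ[C] K) (hJ : ∀ x ∈ J, LinearMap.lTensor A f x ∈ J) {μ : K}
    (hμ : μ ∈ firstCoeffIdeal J a₀ a) : f μ ∈ firstCoeffIdeal J a₀ a := by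
  obtain ⟨ν, h⟩ := hμ
  refine ⟨fun k => f (ν k), ?_⟩
  simpa using hJ _ h

lemma exists_tmul_one_add_sum_mem (δ : Δ → K →ₗ[C] K)
    (hsimple : ∀ T : Ideal K, (∀ i, ∀ x ∈ T, δ i x ∈ T) → T = ⊥ ∨ T = ⊤)
    {J : Ideal (A ⊗[C] K)} (hJ : ∀ i, ∀ x ∈ J, LinearMap.lTensor A (δ i) x ∈ J)
    (a₀ : A) {m : ℕ} (a : Fin m → A) {μ₀ : K} (μ : Fin m → K) (hμ₀ : μ₀ ≠ 0)
    (hmem : a₀ ⊗ₜ[C] μ₀ + ∑ k, a k ⊗ₜ[C] μ k ∈ J) :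
    ∃ ν : Fin m → K, a₀ ⊗ₜ[C] (1 : K) + ∑ k, a k ⊗ₜ[C] ν k ∈ J := by
  have hT : firstCoeffIdeal J a₀ a = ⊤ := by
    refine (hsimple _ fun i _ hμ => map_mem_firstCoeffIdeal (δ i) (hJ i) hμ).resolve_left ?_
    intro hbot
    have hμ₀T : μ₀ ∈ firstCoeffIdeal J a₀ a := ⟨μ, hmem⟩
    rw [hbot, Ideal.mem_bot] at hμ₀T
    exact hμ₀ hμ₀T
  exact (hT ▸ Submodule.mem_top : (1 : K) ∈ firstCoeffIdeal J a₀ a)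

end CoefficientIdeal

section DifferentialIdeals

variable {C K A Δ : Type*} [Field C] [CommRing K] [Algebra C K] [Nontrivial K] [CommRing A]
  [Algebra C A] (δ : Δ → K →ₗ[C] K)

lemma mem_map_comap_inclLeft_of_lTensor_mem
    (hker : ∀ k : K, (∀ i, δ i k = 0) → k ∈ Set.range (algebraMap C K))
    {J : Ideal (A ⊗[C] K)} {y : A ⊗[C] K} (hy : y ∈ J)
    (hδy : ∀ i, LinearMap.lTensor A (δ i) y ∈ (J.comap (inclLeft C A K)).map (inclLeft C A K)) :
    y ∈ (J.comap (inclLeft C A K)).map (inclLeft C A K) := by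
  obtain ⟨b, hb⟩ := exists_sub_tmul_one_mem_map_inclLeft δ hker _ y hδy
  have hbJ : inclLeft C A K b ∈ J := by
    simpa using J.sub_mem hy (Ideal.map_comap_le hb)
  simpa using Ideal.add_mem _ hb (Ideal.mem_map_of_mem _ hbJ)

theorem sum_tmul_mem_map_comap_inclLeft
    (hsimple : ∀ T : Ideal K, (∀ i, ∀ x ∈ T, δ i x ∈ T) → T = ⊥ ∨ T = ⊤)
    (hker : ∀ k : K, (∀ i, δ i k = 0) → k ∈ Set.range (algebraMap C K))
    (hone : ∀ i, δ i 1 = 0)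
    {J : Ideal (A ⊗[C] K)} (hJ : ∀ i, ∀ x ∈ J, LinearMap.lTensor A (δ i) x ∈ J) {n : ℕ}
    (a : Fin n → A) (μ : Fin n → K) (hmem : ∑ k, a k ⊗ₜ[C] μ k ∈ J) :
    ∑ k, a k ⊗ₜ[C] μ k ∈ (J.comap (inclLeft C A K)).map (inclLeft C A K) := by
  induction n with
  | zero => simp
  | succ m IH =>
    set E := (J.comap (inclLeft C A K)).map (inclLeft C A K)
    rw [Fin.sum_univ_succ] at hmem ⊢
    by_cases hμ₀ : μ 0 = 0
    · simp only [hμ₀, TensorProduct.tmul_zero, zero_add] at hmem ⊢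
      exact IH _ _ hmem
    obtain ⟨ν, hy⟩ := exists_tmul_one_add_sum_mem δ hsimple hJ _ _ _ hμ₀ hmem
    have hyE : a 0 ⊗ₜ[C] (1 : K) + ∑ k : Fin m, a k.succ ⊗ₜ[C] ν k ∈ E := by
      refine mem_map_comap_inclLeft_of_lTensor_mem δ hker hy fun i => ?_
      have hδy := hJ i _ hy
      simp only [map_add, map_sum, LinearMap.lTensor_tmul, hone, TensorProduct.tmul_zero,
        zero_add] at hδy ⊢
      exact IH _ _ hδy
    have hrest : ∑ k : Fin m, a k.succ ⊗ₜ[C] (μ k.succ - μ 0 * ν k) ∈ J := by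
      convert J.sub_mem hmem (J.mul_mem_left ((1 : A) ⊗ₜ[C] μ 0) hy) using 1
      simp [mul_add, Finset.mul_sum, Algebra.TensorProduct.tmul_mul_tmul, TensorProduct.tmul_sub,
        Finset.sum_sub_distrib]
    convert E.add_mem (IH _ _ hrest) (E.mul_mem_left ((1 : A) ⊗ₜ[C] μ 0) hyE) using 1
    simp only [TensorProduct.tmul_sub, Finset.sum_sub_distrib, mul_add,
      Algebra.TensorProduct.tmul_mul_tmul, one_mul, mul_one, Finset.mul_sum, sub_add_add_cancel]
    abel

theorem map_comap_inclLeft_eq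
    (hsimple : ∀ T : Ideal K, (∀ i, ∀ x ∈ T, δ i x ∈ T) → T = ⊥ ∨ T = ⊤)
    (hker : ∀ k : K, (∀ i, δ i k = 0) → k ∈ Set.range (algebraMap C K))
    (hone : ∀ i, δ i 1 = 0)
    {J : Ideal (A ⊗[C] K)} (hJ : ∀ i, ∀ x ∈ J, LinearMap.lTensor A (δ i) x ∈ J) :
    (J.comap (inclLeft C A K)).map (inclLeft C A K) = J := by
  refine le_antisymm Ideal.map_comap_le fun x hx => ?_
  obtain ⟨n, a, μ, rfl⟩ := TensorProduct.exists_fin_sum_tmul x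
  exact sum_tmul_mem_map_comap_inclLeft δ hsimple hker hone hJ a μ hx

end DifferentialIdeals

section Constants

variable {K Δ : Type*} [CommRing K] (d : Δ → Derivation ℤ K K)

def Derivation.toConstantsLinearMap (i : Δ) : K →ₗ[constants d] K where
  toFun := d i
  map_add' := map_add (d i)
  map_smul' c x := by
    rw [RingHom.id_apply, Algebra.smul_def, Algebra.smul_def, (d i).leibniz, smul_eq_mul,
      smul_eq_mul]
    exact (add_eq_left.mpr (mul_eq_zero_of_right x (c.2 i)))

@[simp] lemma Derivation.toConstantsLinearMap_apply (i : Δ) (x : K) :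
    Derivation.toConstantsLinearMap d i x = d i x := rfl

lemma Derivation.eq_lTensor_toConstantsLinearMap {A : Type*} [CommRing A]
    [Algebra (constants d) A] {D : Derivation ℤ (A ⊗[constants d] K) (A ⊗[constants d] K)}
    {i : Δ} (hD : ∀ (a : A) (c : K), D (a ⊗ₜ c) = a ⊗ₜ[constants d] (d i c))
    (x : A ⊗[constants d] K) :
    D x = LinearMap.lTensor A (Derivation.toConstantsLinearMap d i) x := by
  induction x using TensorProduct.induction_on with
  | zero => simp
  | tmul a c => simp [hD]
  | add x y hx hy => rw [map_add, map_add, hx, hy]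

end Constants

theorem stmt_11_general {K Δ : Type*} [CommRing K] (d : Δ → Derivation ℤ K K)
    (hsimple : ∀ I : Ideal K, (∀ i, ∀ x ∈ I, d i x ∈ I) → I = ⊥ ∨ I = ⊤)
    (hC : IsField (constants d))
    (φ : K →+* constants d)
    (A : Type*) [CommRing A] [Algebra (constants d) A]
    (D : Δ → Derivation ℤ (A ⊗[constants d] K) (A ⊗[constants d] K))
    (hD : ∀ i (a : A) (c : K), D i (a ⊗ₜ c) = a ⊗ₜ[constants d] (d i c))
    (j : A ⊗[constants d] K →+* A)
    (hj : ∀ (a : A) (c : K), j (a ⊗ₜ c) = a * algebraMap (constants d) A (φ c)) :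
    (∀ J : Ideal (A ⊗[constants d] K), (∀ i, ∀ x ∈ J, D i x ∈ J) →
      (J.comap (inclLeft (constants d) A K) : Set A) = j '' J) ∧
    (∀ I : Ideal A,
      {x : A ⊗[constants d] K | ∀ l : List Δ, derWord D l x ∈ I.comap j} =
        ↑(I.map (inclLeft (constants d) A K))) := by
  let _ : Field (constants d) := hC.toField
  have : Nontrivial K := Function.Injective.nontrivial (f := ((↑) : constants d → K)) Subtype.val_injective
  set δ := Derivation.toConstantsLinearMap d
  have hDδ : ∀ i x, D i x = LinearMap.lTensor A (δ i) x := fun i =>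
    Derivation.eq_lTensor_toConstantsLinearMap d (hD i)
  have hker : ∀ k : K, (∀ i, δ i k = 0) → k ∈ Set.range (algebraMap (constants d) K) :=
    fun k hk => ⟨⟨k, hk⟩, rfl⟩
  have hone : ∀ i, δ i 1 = 0 := fun i => (d i).map_one_eq_zero
  have hj_tmul_one : ∀ a : A, j (a ⊗ₜ 1) = a := fun a => by
    rw [hj, map_one, map_one, mul_one]
  have hmap_le : ∀ I : Ideal A, I.map (inclLeft (constants d) A K) ≤ I.comap j := fun I =>
    Ideal.map_le_iff_le_comap.mpr fun a ha => by simpa [Ideal.mem_comap, hj_tmul_one] using ha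
  have hstable : ∀ {J : Ideal (A ⊗[constants d] K)}, (∀ i, ∀ x ∈ J, D i x ∈ J) →
      (J.comap (inclLeft (constants d) A K)).map (inclLeft (constants d) A K) = J :=
    fun hJ => map_comap_inclLeft_eq δ hsimple hker hone fun i x hx => hDδ i x ▸ hJ i x hx
  refine ⟨fun J hJ => Set.ext fun a => ⟨fun ha => ⟨_, ha, hj_tmul_one a⟩, ?_⟩, fun I => ?_⟩
  · rintro ⟨x, hx, rfl⟩
    exact hmap_le _ ((hstable hJ).symm ▸ hx)
  · show ((I.comap j).derivCore D : Set (A ⊗[constants d] K)) = _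
    refine congrArg _ (le_antisymm ?_ ?_)
    · rw [← hstable fun i _ => Ideal.derivation_mem_derivCore D i]
      refine Ideal.map_mono fun a ha => ?_
      simpa [hj_tmul_one] using Ideal.derivCore_le D _ ha
    · refine Ideal.le_derivCore D (fun i x hx => ?_) (hmap_le I)
      exact hDδ i x ▸ lTensor_mem_map_inclLeft (δ i) I hx

/-- Let `K` be a simple `Δ`-ring with field of constants `C`, `φ : K → C` a `C`-algebra
homomorphism, `A` a commutative `C`-algebra; equip `A ⊗_C K` with the derivations `D i`
characterized by `D i (a ⊗ λ) = a ⊗ d i λ`, and let `i : A → A ⊗_C K`, `a ↦ a ⊗ 1` and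
`j : A ⊗_C K → A`, `a ⊗ λ ↦ a·φ(λ)`. Then (1) for every `Δ`-ideal `J` of `A ⊗_C K`,
`i⁻¹(J) = j(J)`; and (2) for every ideal `I` of `A`, the largest `Δ`-ideal contained in
`j⁻¹(I)`, namely `{x : θ(x) ∈ j⁻¹(I) for every word θ in the D i's}`, is the ideal
generated by `i(I)`. -/
theorem stmt_11 {K Δ : Type*} [CommRing K] (d : Δ → Derivation ℤ K K)
    (hsimple : ∀ I : Ideal K, (∀ i, ∀ x ∈ I, d i x ∈ I) → I = ⊥ ∨ I = ⊤)
    (hC : IsField (constants d))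
    (φ : K →+* constants d) (hφ : ∀ c : constants d, φ ↑c = c)
    (A : Type*) [CommRing A] [Algebra (constants d) A]
    (D : Δ → Derivation ℤ (A ⊗[constants d] K) (A ⊗[constants d] K))
    (hD : ∀ i (a : A) (c : K), D i (a ⊗ₜ c) = a ⊗ₜ[constants d] (d i c))
    (j : A ⊗[constants d] K →+* A)
    (hj : ∀ (a : A) (c : K), j (a ⊗ₜ c) = a * algebraMap (constants d) A (φ c)) :
    (∀ J : Ideal (A ⊗[constants d] K), (∀ i, ∀ x ∈ J, D i x ∈ J) →
      (J.comap (inclLeft (constants d) A K) : Set A) = j '' J) ∧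
    (∀ I : Ideal A,
      {x : A ⊗[constants d] K | ∀ l : List Δ, derWord D l x ∈ I.comap j} =
        ↑(I.map (inclLeft (constants d) A K))) :=
  stmt_11_general d hsimple hC φ A D hD j hj
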